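/- arXiv:math/0210077 — 2 statements merged into one kernel-verified Lean document; each statement's English description precedes it below -/
import Mathlib

section
/- Let J ⊂ k[x_1,...,x_s] be a monomial ideal with minimal generating lattice set E ⊂ ℕ^s such that k[x_1,...,x_s]/J has finite length. Define F as the set of corners a = max(v_1,...,v_s) - (1,...,1) with v_1,...,v_s ∈ E such that the j-th coordinate of v_j strictly exceeds that of v_h for h ≠ j, and a ∉ E + ℕ^s. Then max{ r : (k[x_1,...,x_s]/J)_r ≠ 0 } = max_{a ∈ F} |a|. -/
open MvPolynomial

noncomputable section

/-- Coercion of a natural number into `WithBot ℕ∞` (degrees, with `⊥ = -∞`, `⊤ = ∞`). -/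
def natW (r : ℕ) : WithBot ℕ∞ := ((r : ℕ∞) : WithBot ℕ∞)

/-- The total degree `|a|` of an exponent vector. -/
def degOf {n : ℕ} (a : Fin n →₀ ℕ) : ℕ := a.sum fun _ e => e

variable {k : Type*} [Field k] {n : ℕ}

/-- The top degree in which the graded pieces of two ideals differ
(`⊥` if they never differ, `⊤` if they differ in unboundedly many degrees). -/
def topDiff (I J : Ideal (MvPolynomial (Fin n) k)) : WithBot ℕ∞ :=
  sSup {x | ∃ r : ℕ, x = natW r ∧
    ¬ ∀ f : MvPolynomial (Fin n) k, f.IsHomogeneous r → (f ∈ I ↔ f ∈ J)}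

/-- `I` is a homogeneous (graded) ideal. -/
def HomogIdeal (I : Ideal (MvPolynomial (Fin n) k)) : Prop :=
  ∀ f ∈ I, ∀ r : ℕ, homogeneousComponent r f ∈ I

/-- The maximal homogeneous ideal `𝔪 = (x₁, …, xₙ)`. -/
def maxIdl (k : Type*) [Field k] (n : ℕ) : Ideal (MvPolynomial (Fin n) k) :=
  Ideal.span (Set.range X)

/-- The ideal `(I, z₁, …, z_i)`. -/
def partIdeal (I : Ideal (MvPolynomial (Fin n) k)) {m : ℕ}
    (z : Fin m → MvPolynomial (Fin n) k) (i : ℕ) : Ideal (MvPolynomial (Fin n) k) :=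
  I ⊔ Ideal.span (z '' {j : Fin m | (j : ℕ) < i})

/-- `a_z^i(S/I) = sup { r : [(I,z₁,…,z_i) : z_{i+1}]_r ≠ (I,z₁,…,z_i)_r }`. -/
def aInv (I : Ideal (MvPolynomial (Fin n) k)) {m : ℕ}
    (z : Fin m → MvPolynomial (Fin n) k) (i : Fin m) : WithBot ℕ∞ :=
  topDiff ((partIdeal I z (i : ℕ)).colon (Ideal.span {z i})) (partIdeal I z (i : ℕ))

/-- `z` is a filter-regular sequence for `S/I`: each `z_{i+1}` avoids every associated
prime of `(I,z₁,…,z_i)` other than the maximal homogeneous ideal. -/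
def FilterRegular (I : Ideal (MvPolynomial (Fin n) k)) {m : ℕ}
    (z : Fin m → MvPolynomial (Fin n) k) : Prop :=
  ∀ i : Fin m, ∀ p : Ideal (MvPolynomial (Fin n) k),
    IsAssociatedPrime p (MvPolynomial (Fin n) k ⧸ partIdeal I z (i : ℕ)) →
    p ≠ maxIdl k n → z i ∉ p

/-- The saturation `⋃_{m ≥ 1} (J : z^m)`. -/
def satIdeal (J : Ideal (MvPolynomial (Fin n) k)) (z : MvPolynomial (Fin n) k) :
    Ideal (MvPolynomial (Fin n) k) :=
  ⨆ m : ℕ, J.colon (Ideal.span {z ^ (m + 1)})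

/-- `a <_drevlex b` for the degree reverse lexicographic order with `x₁ > x₂ > … > xₙ`. -/
def RevLexLT {n : ℕ} (a b : Fin n →₀ ℕ) : Prop :=
  degOf a < degOf b ∨
    (degOf a = degOf b ∧ ∃ j : Fin n, b j < a j ∧ ∀ l : Fin n, j < l → a l = b l)

/-- The initial ideal of `I` with respect to the reverse lexicographic order:
the ideal generated by the leading monomials of the nonzero elements of `I`. -/
def initialIdeal (I : Ideal (MvPolynomial (Fin n) k)) : Ideal (MvPolynomial (Fin n) k) :=
  Ideal.span {g | ∃ f ∈ I, f ≠ 0 ∧ ∃ μ ∈ f.support,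
    (∀ ν ∈ f.support, ν = μ ∨ RevLexLT ν μ) ∧ g = monomial μ (1 : k)}

/-- The evaluation `x_{n-i+1} = ⋯ = x_n = 0`. -/
def evalZero (k : Type*) [Field k] (n i : ℕ) :
    MvPolynomial (Fin n) k →ₐ[k] MvPolynomial (Fin n) k :=
  aeval fun j : Fin n => if (j : ℕ) < n - i then X j else 0

/-- The evaluation `x_{n-i+1} = ⋯ = x_n = 0`, `x_{n-i} = 1`. -/
def evalOne (k : Type*) [Field k] (n i : ℕ) :
    MvPolynomial (Fin n) k →ₐ[k] MvPolynomial (Fin n) k :=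
  aeval fun j : Fin n =>
    if (j : ℕ) < n - i - 1 then X j else if (j : ℕ) = n - i - 1 then 1 else 0

/-- `J_i`: the ideal obtained from `In(I)` by evaluating `x_{n-i+1} = ⋯ = x_n = 0`. -/
def Jlow (i : ℕ) (I : Ideal (MvPolynomial (Fin n) k)) : Ideal (MvPolynomial (Fin n) k) :=
  Ideal.map (evalZero k n i) (initialIdeal I)

/-- `J̃_i`: the ideal obtained from `J_i` by the further evaluation `x_{n-i} = 1`. -/
def Jtil (i : ℕ) (I : Ideal (MvPolynomial (Fin n) k)) : Ideal (MvPolynomial (Fin n) k) :=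
  Ideal.map (evalOne k n i) (initialIdeal I)

/-- `c_i(I) = sup { r : (J̃_i/J_i)_r ≠ 0 }`, computed in `S_i = k[x₁,…,x_{n-i}]`. -/
def cInv (i : ℕ) (I : Ideal (MvPolynomial (Fin n) k)) : WithBot ℕ∞ :=
  sSup {x | ∃ r : ℕ, x = natW r ∧ ∃ f : MvPolynomial (Fin n) k,
    f ∈ Jtil i I ∧ f ∈ supported k {j : Fin n | (j : ℕ) < n - i} ∧
    f.IsHomogeneous r ∧ f ∉ Jlow i I}

/-- `r(I) = sup { r : (S_d/J_d)_r ≠ 0 }`. -/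
def rInv (d : ℕ) (I : Ideal (MvPolynomial (Fin n) k)) : WithBot ℕ∞ :=
  sSup {x | ∃ r : ℕ, x = natW r ∧ ∃ f : MvPolynomial (Fin n) k,
    f ∈ supported k {j : Fin n | (j : ℕ) < n - d} ∧ f.IsHomogeneous r ∧ f ∉ Jlow d I}

/-- The partial regularity `reg_t(S/I)`, via its characterization
`reg_t(S/I) = max_i a_z^i(S/I)` for any filter-regular sequence `z` of `t+1` linear forms
([T1, Proposition 2.2]; equal to `max { aᵢ(S/I) + i : i ≤ t }` in terms of local cohomology). -/
def regT (t : ℕ) (I : Ideal (MvPolynomial (Fin n) k)) : WithBot ℕ∞ :=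
  sSup {x | ∃ z : Fin (t + 1) → MvPolynomial (Fin n) k,
    (∀ j, (z j).IsHomogeneous 1) ∧ FilterRegular I z ∧
    x = ⨆ i : Fin (t + 1), aInv I z i}

/-- The Castelnuovo–Mumford regularity `reg(S/I)`, via its characterization
`reg(S/I) = max { a_z^0, …, a_z^{d-1}, r_z(S/I) }` for any filter-regular sequence `z`
of `d = dim S/I` linear forms ([BS, Theorem 1.10], [T1, Corollary 3.3]). -/
def regCM (I : Ideal (MvPolynomial (Fin n) k)) : WithBot ℕ∞ :=
  sSup {x | ∃ d : ℕ, ringKrullDim (MvPolynomial (Fin n) k ⧸ I) = natW d ∧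
    ∃ z : Fin d → MvPolynomial (Fin n) k,
      (∀ j, (z j).IsHomogeneous 1) ∧ FilterRegular I z ∧
      x = (⨆ i : Fin d, aInv I z i) ⊔ topDiff ⊤ (I ⊔ Ideal.span (Set.range z))}

/-- The exponent vectors of the minimal monomial generators of a monomial ideal. -/
def minGens (I : Ideal (MvPolynomial (Fin n) k)) : Set (Fin n →₀ ℕ) :=
  {μ | monomial μ (1 : k) ∈ I ∧
    ∀ ν : Fin n →₀ ℕ, monomial ν (1 : k) ∈ I → ν ≤ μ → ν = μ}

/-- `E_i`: the exponent vectors of the minimal generators of `In(I)` involving none of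
the variables `x_{n-i+1}, …, x_n`. -/
def Evar (i : ℕ) (I : Ideal (MvPolynomial (Fin n) k)) : Set (Fin n →₀ ℕ) :=
  {μ ∈ minGens (initialIdeal I) | ∀ j : Fin n, n - i ≤ (j : ℕ) → μ j = 0}

/-- The set `F` of corners of the staircase determined by `E`:
vectors `a = max(v₁,…,v_s) - (1,…,1)` where `v j ∈ E`, the `j`-th coordinate of `v j`
strictly exceeds that of `v h` for `h ≠ j`, and `a ≱ w` for all `w ∈ E`. -/
def corners {s : ℕ} (E : Set (Fin s →₀ ℕ)) : Set (Fin s →₀ ℕ) :=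
  {a | (∃ v : Fin s → (Fin s →₀ ℕ), (∀ j, v j ∈ E) ∧
      (∀ j h : Fin s, h ≠ j → v h j < v j j) ∧
      ∀ l : Fin s, a l + 1 = Finset.univ.sup fun j => v j l) ∧
    ∀ w ∈ E, ¬ w ≤ a}

section Aux

lemma degOf_eq_degree {s : ℕ} (a : Fin s →₀ ℕ) : degOf a = Finsupp.degree a := rfl

lemma natW_le_natW {a b : ℕ} : natW a ≤ natW b ↔ a ≤ b := by
  simp [natW]

lemma degOf_add {s : ℕ} (a b : Fin s →₀ ℕ) : degOf (a + b) = degOf a + degOf b := by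
  unfold degOf
  exact Finsupp.sum_add_index' (fun _ => rfl) (fun _ _ _ => rfl)

lemma degOf_single {s : ℕ} (j : Fin s) : degOf (Finsupp.single j 1) = 1 := by
  unfold degOf
  exact Finsupp.sum_single_index rfl

lemma natW_cases (x : WithBot ℕ∞) (hx : x ≠ ⊥) (ht : x ≠ ⊤) : ∃ N : ℕ, x = natW N := by
  induction x using WithBot.recBotCoe with
  | bot => exact absurd rfl hx
  | coe y =>
    induction y using WithTop.recTopCoe with
    | top => exact absurd rfl ht
    | coe n => exact ⟨n, rfl⟩

lemma maximal_is_corner {s : ℕ} (E : Set (Fin s →₀ ℕ)) (a : Fin s →₀ ℕ)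
    (ha : ∀ w ∈ E, ¬ w ≤ a)
    (hmax : ∀ j : Fin s, ∃ w ∈ E, w ≤ a + Finsupp.single j 1) :
    a ∈ corners E := by
  refine ⟨?_, ha⟩
  choose v hvE hvle using hmax
  have key : ∀ j, v j j = a j + 1 ∧ ∀ l, l ≠ j → v j l ≤ a l := by
    intro j
    have h1 : ∀ l, v j l ≤ a l + Finsupp.single j 1 l := Finsupp.le_def.mp (hvle j)
    have h2 : ∀ l, l ≠ j → v j l ≤ a l := by
      intro l hl
      have := h1 l
      rwa [Finsupp.single_apply, if_neg (Ne.symm hl), add_zero] at this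
    have h3 : ¬ v j ≤ a := ha (v j) (hvE j)
    rw [Finsupp.le_def] at h3
    push_neg at h3
    obtain ⟨l, hl⟩ := h3
    have hlj : l = j := by
      by_contra hne
      exact absurd (h2 l hne) (not_le.mpr hl)
    subst hlj
    have := h1 l
    rw [Finsupp.single_apply, if_pos rfl] at this
    exact ⟨le_antisymm this hl, h2⟩
  refine ⟨v, hvE, ?_, ?_⟩
  · intro j h hne
    calc v h j ≤ a j := (key h).2 j (Ne.symm hne)
    _ < a j + 1 := Nat.lt_succ_self _
    _ = v j j := ((key j).1).symm
  · intro l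
    apply le_antisymm
    · calc a l + 1 = v l l := ((key l).1).symm
      _ ≤ Finset.univ.sup fun j => v j l :=
        Finset.le_sup (f := fun j => v j l) (Finset.mem_univ l)
    · apply Finset.sup_le
      intro j _
      by_cases hjl : j = l
      · subst hjl; exact le_of_eq (key j).1
      · exact le_trans ((key j).2 l (Ne.symm hjl)) (Nat.le_succ _)

lemma exists_corner {s : ℕ} (E : Set (Fin s →₀ ℕ)) (N : ℕ)
    (hbd : ∀ μ : Fin s →₀ ℕ, (∀ w ∈ E, ¬ w ≤ μ) → degOf μ ≤ N) :
    ∀ m (μ : Fin s →₀ ℕ), (∀ w ∈ E, ¬ w ≤ μ) → N - degOf μ ≤ m →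
      ∃ a ∈ corners E, degOf μ ≤ degOf a := by
  intro m
  induction m with
  | zero =>
    intro μ hμ hm
    by_cases hmax : ∀ j, ∃ w ∈ E, w ≤ μ + Finsupp.single j 1
    · exact ⟨μ, maximal_is_corner E μ hμ hmax, le_rfl⟩
    · exfalso
      push_neg at hmax
      obtain ⟨j, hj⟩ := hmax
      have h1 : ∀ w ∈ E, ¬ w ≤ μ + Finsupp.single j 1 := hj
      have h2 := hbd _ h1
      rw [degOf_add, degOf_single] at h2
      omega
  | succ m ih =>
    intro μ hμ hm
    by_cases hmax : ∀ j, ∃ w ∈ E, w ≤ μ + Finsupp.single j 1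
    · exact ⟨μ, maximal_is_corner E μ hμ hmax, le_rfl⟩
    · push_neg at hmax
      obtain ⟨j, hj⟩ := hmax
      have h2 := hbd _ hj
      rw [degOf_add, degOf_single] at h2
      obtain ⟨a, haC, hale⟩ := ih (μ + Finsupp.single j 1) hj (by
        rw [degOf_add, degOf_single]; omega)
      refine ⟨a, haC, ?_⟩
      rw [degOf_add, degOf_single] at hale
      omega

lemma monomial_not_mem {k : Type*} [Field k] {s : ℕ} (E : Set (Fin s →₀ ℕ))
    (μ : Fin s →₀ ℕ) (hμ : ∀ w ∈ E, ¬ w ≤ μ) :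
    monomial μ (1 : k) ∉ Ideal.span ((fun v => monomial v (1 : k)) '' E) := by
  rw [mem_ideal_span_monomial_image]
  push_neg
  refine ⟨μ, ?_, hμ⟩
  rw [mem_support_iff, coeff_monomial, if_pos rfl]
  exact one_ne_zero

end Aux

/-- Proposition 4.3: for a monomial ideal `J ⊆ k[x₁,…,x_s]` with minimal
generating lattice set `E` and Artinian quotient, the top nonvanishing degree of
`k[x₁,…,x_s]/J` equals `max_{a ∈ F} |a|` over the corner set `F`. -/
theorem stmt_11 {k : Type*} [Field k] (s : ℕ) (E : Set (Fin s →₀ ℕ))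
    (hmin : ∀ v ∈ E, ∀ w ∈ E, w ≤ v → w = v)
    (J : Ideal (MvPolynomial (Fin s) k))
    (hJ : J = Ideal.span ((fun v => monomial v (1 : k)) '' E))
    (hfin : sSup {x : WithBot ℕ∞ | ∃ r : ℕ, x = natW r ∧
        ∃ f : MvPolynomial (Fin s) k, f.IsHomogeneous r ∧ f ∉ J} < ⊤) :
    sSup {x : WithBot ℕ∞ | ∃ r : ℕ, x = natW r ∧
        ∃ f : MvPolynomial (Fin s) k, f.IsHomogeneous r ∧ f ∉ J}
      = sSup {x : WithBot ℕ∞ | ∃ a ∈ corners E, x = natW (degOf a)} := by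
  subst hJ
  have hhomog : ∀ a : Fin s →₀ ℕ, (monomial a (1 : k)).IsHomogeneous (degOf a) :=
    fun a => isHomogeneous_monomial _ rfl
  apply le_antisymm
  · apply sSup_le
    rintro x ⟨r, rfl, f, hf, hfJ⟩
    rw [mem_ideal_span_monomial_image] at hfJ
    push_neg at hfJ
    obtain ⟨μ, hμs, hμ⟩ := hfJ
    have hdeg : degOf μ = r := by
      rw [degOf_eq_degree, Finsupp.degree_eq_weight_one]
      exact hf (mem_support_iff.mp hμs)
    -- extract the degree bound N from hfin
    set L := {x : WithBot ℕ∞ | ∃ r : ℕ, x = natW r ∧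
        ∃ f : MvPolynomial (Fin s) k, f.IsHomogeneous r ∧
          f ∉ Ideal.span ((fun v => monomial v (1 : k)) '' E)} with hL
    have hmemL : ∀ ν : Fin s →₀ ℕ, (∀ w ∈ E, ¬ w ≤ ν) → natW (degOf ν) ∈ L :=
      fun ν hν => ⟨degOf ν, rfl, monomial ν 1, hhomog ν, monomial_not_mem E ν hν⟩
    have hne : sSup L ≠ ⊥ := by
      intro h
      have := le_sSup (hmemL μ hμ)
      rw [h, le_bot_iff] at this
      exact WithBot.coe_ne_bot this
    obtain ⟨N, hN⟩ := natW_cases (sSup L) hne (ne_of_lt hfin)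
    have hbd : ∀ ν : Fin s →₀ ℕ, (∀ w ∈ E, ¬ w ≤ ν) → degOf ν ≤ N := by
      intro ν hν
      have := le_sSup (hmemL ν hν)
      rw [hN] at this
      exact natW_le_natW.mp this
    obtain ⟨a, haC, hale⟩ := exists_corner E N hbd (N - degOf μ) μ hμ le_rfl
    have h1 : natW r ≤ natW (degOf a) := natW_le_natW.mpr (hdeg ▸ hale)
    refine le_trans h1 (le_sSup ?_)
    exact ⟨a, haC, rfl⟩
  · apply sSup_le
    rintro x ⟨a, ⟨_, hstd⟩, rfl⟩
    apply le_sSup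
    exact ⟨degOf a, rfl, monomial a 1, hhomog a, monomial_not_mem E a hstd⟩
end
end

section
/- Let J ⊂ k[x_1,...,x_s] be a monomial ideal minimally generated by monomials x^v, v ∈ E, and let Ĵ be generated by the images of these generators under x_s ↦ 1. If x^b ∈ Ĵ \ J is a monomial of maximal degree among monomials in Ĵ \ J (assuming this maximum is finite), then for each j = 1,...,s there exists v_j ∈ E with x_j x^b divisible by x^{v_j}, and b = max(v_1,...,v_s) - (1,...,1) with the j-th coordinate of v_j strictly greater than the j-th coordinate of v_h for all h ≠ j. -/
open MvPolynomial

noncomputable section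

variable {k : Type*} [Field k] {n : ℕ}

section Aux
variable {k : Type*} [Field k] {s : ℕ}

lemma mono_mem_iff (E : Set (Fin s →₀ ℕ)) (b : Fin s →₀ ℕ) :
    monomial b (1 : k) ∈ Ideal.span ((fun v => monomial v (1 : k)) '' E) ↔ ∃ v ∈ E, v ≤ b := by
  classical
  rw [mem_ideal_span_monomial_image]
  constructor
  · intro h
    refine h b ?_
    rw [support_monomial, if_neg one_ne_zero]
    exact Finset.mem_singleton_self b
  · intro h xi hxi
    rw [support_monomial, if_neg one_ne_zero, Finset.mem_singleton] at hxi
    subst hxi; exact h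

lemma degOf_add_single (b : Fin s →₀ ℕ) (j : Fin s) :
    degOf (b + Finsupp.single j 1) = degOf b + 1 := by
  unfold degOf
  rw [Finsupp.sum_add_index' (fun _ => rfl) (fun _ _ _ => rfl),
    Finsupp.sum_single_index rfl]

end Aux

/-- key step of Proposition 4.2: a monomial `x^b ∈ J̃ \ J` of maximal
degree is a corner: for each `j` there is `v_j ∈ E` with `x^{v_j} ∣ x_j x^b`,
`b = max(v₁,…,v_s) - (1,…,1)`, and the `j`-th coordinate of `v_j` strictly dominates. -/
theorem stmt_17 {k : Type*} [Field k] (s : ℕ) (hs : 0 < s) (E : Set (Fin s →₀ ℕ))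
    (hmin : ∀ v ∈ E, ∀ w ∈ E, w ≤ v → w = v)
    (J Jt : Ideal (MvPolynomial (Fin s) k))
    (hJ : J = Ideal.span ((fun v => monomial v (1 : k)) '' E))
    (hJt : Jt = Ideal.span
      ((fun v => monomial (Finsupp.erase (⟨s - 1, by omega⟩ : Fin s) v) (1 : k)) '' E))
    (b : Fin s →₀ ℕ)
    (hbmem : monomial b (1 : k) ∈ Jt) (hbnot : monomial b (1 : k) ∉ J)
    (hbmax : ∀ b' : Fin s →₀ ℕ, monomial b' (1 : k) ∈ Jt → monomial b' (1 : k) ∉ J →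
      degOf b' ≤ degOf b) :
    ∃ v : Fin s → (Fin s →₀ ℕ), (∀ j, v j ∈ E) ∧
      (∀ j : Fin s, v j ≤ b + Finsupp.single j 1) ∧
      (∀ l : Fin s, b l + 1 = Finset.univ.sup fun j => v j l) ∧
      (∀ j h : Fin s, h ≠ j → v h j < v j j) := by
  subst hJ hJt
  have hbnot' : ∀ w ∈ E, ¬ w ≤ b := by
    intro w hw hle
    exact hbnot ((mono_mem_iff E b).mpr ⟨w, hw, hle⟩)
  have hstep : ∀ j : Fin s, ∃ w ∈ E, w ≤ b + Finsupp.single j 1 := by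
    intro j
    have hmemt : monomial (b + Finsupp.single j 1) (1 : k) ∈
        Ideal.span ((fun v => monomial
          (Finsupp.erase (⟨s - 1, by omega⟩ : Fin s) v) (1 : k)) '' E) := by
      have heq : monomial (b + Finsupp.single j 1) (1 : k)
          = monomial b 1 * monomial (Finsupp.single j 1) 1 := by
        rw [monomial_mul, one_mul]
      rw [heq]
      exact Ideal.mul_mem_right _ _ hbmem
    by_contra hcon
    push_neg at hcon
    have hnJ : monomial (b + Finsupp.single j 1) (1 : k) ∉
        Ideal.span ((fun v => monomial v (1 : k)) '' E) := by
      rw [mono_mem_iff]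
      push_neg
      exact hcon
    have := hbmax _ hmemt hnJ
    rw [degOf_add_single] at this
    omega
  choose v hvE hvle using hstep
  have hkey : ∀ j : Fin s, v j j = b j + 1 ∧ ∀ l : Fin s, l ≠ j → v j l ≤ b l := by
    intro j
    have hoff : ∀ l : Fin s, l ≠ j → v j l ≤ b l := by
      intro l hl
      have h2 := Finsupp.le_def.mp (hvle j) l
      rwa [Finsupp.add_apply, Finsupp.single_apply, if_neg (fun h => hl h.symm),
        add_zero] at h2
    refine ⟨?_, hoff⟩
    have hne : ¬ v j ≤ b := hbnot' _ (hvE j)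
    have hj : v j j ≤ b j + 1 := by
      have h2 := Finsupp.le_def.mp (hvle j) j
      rwa [Finsupp.add_apply, Finsupp.single_apply, if_pos rfl] at h2
    by_contra hcon
    apply hne
    intro l
    by_cases hl : l = j
    · subst hl; omega
    · exact hoff l hl
  refine ⟨v, hvE, hvle, ?_, ?_⟩
  · intro l
    refine le_antisymm ?_ ?_
    · simpa [(hkey l).1] using Finset.le_sup (f := fun j => v j l) (Finset.mem_univ l)
    · refine Finset.sup_le fun j _ => ?_
      by_cases hl : j = l
      · subst hl; rw [(hkey j).1]
      · exact le_trans ((hkey j).2 l (fun h => hl h.symm)) (Nat.le_succ _)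
  · intro j h hne
    calc v h j ≤ b j := (hkey h).2 j (Ne.symm hne)
    _ < b j + 1 := Nat.lt_succ_self _
    _ = v j j := ((hkey j).1).symm
end
end
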